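/- Let S be a linearly independent subset of a ℚ-vector space and Σ a finite subset of the cone ℚ≥0·S. If α, β ∈ Σ are positive rational multiples of two distinct elements of S, then the cone ℚ≥0·α + ℚ≥0·β is a face of the cone generated by Σ. -/

import Mathlib

variable {V : Type*} [AddCommGroup V] [Module ℚ V]

/-- The cone of all finite nonnegative rational combinations of elements of `S`. -/
def coneGen (S : Set V) : Set V :=
  {v | ∃ c : V →₀ ℚ, (↑c.support ⊆ S) ∧ (∀ s, 0 ≤ c s) ∧ v = c.sum fun s q => q • s}

/-- `F` is a face of the cone `C` (as sets). -/
def IsFaceOfSet (F C : Set V) : Prop :=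
  F ⊆ C ∧ ∀ x ∈ C, ∀ y ∈ C, x + y ∈ F → x ∈ F ∧ y ∈ F

/-!
Since `S` is linearly independent, the coefficients of `x` and `y` over `S` add up to those of
`x + y`; being nonnegative, they vanish wherever those of `x + y` do. Hence `coneGen T` is a face
of `coneGen S` for every `T ⊆ S`. Positive rescaling of generators does not change a cone, so
`coneGen {α, β} = coneGen {s₁, s₂}` is such a face, and a face of `coneGen S` stays a face of
every intermediate cone such as `coneGen Sig`.
-/

omit [Module ℚ V] in
lemma IsFaceOfSet.mono {F C D : Set V} (h : IsFaceOfSet F C) (hFD : F ⊆ D) (hDC : D ⊆ C) :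
    IsFaceOfSet F D :=
  ⟨hFD, fun x hx y hy => h.2 x (hDC hx) y (hDC hy)⟩

lemma zero_mem_coneGen (T : Set V) : (0 : V) ∈ coneGen T :=
  ⟨0, by simp, fun _ => le_rfl, by simp⟩

lemma subset_coneGen (T : Set V) : T ⊆ coneGen T := by
  intro s hs
  refine ⟨Finsupp.single s 1, ?_, Finsupp.single_nonneg.mpr zero_le_one, by simp⟩
  exact (Finset.coe_subset.mpr Finsupp.support_single_subset).trans (by simpa using hs)

lemma add_mem_coneGen {T : Set V} {x y : V} (hx : x ∈ coneGen T) (hy : y ∈ coneGen T) :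
    x + y ∈ coneGen T := by
  obtain ⟨c, hcT, hc0, rfl⟩ := hx
  obtain ⟨d, hdT, hd0, rfl⟩ := hy
  classical
  refine ⟨c + d, ?_, fun s => add_nonneg (hc0 s) (hd0 s), ?_⟩
  · exact (Finset.coe_subset.mpr Finsupp.support_add).trans (by simpa using And.intro hcT hdT)
  · rw [Finsupp.sum_add_index' (fun s => zero_smul ℚ s) (fun s a b => add_smul a b s)]

lemma smul_mem_coneGen {T : Set V} {x : V} {q : ℚ} (hq : 0 ≤ q) (hx : x ∈ coneGen T) :
    q • x ∈ coneGen T := by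
  obtain ⟨c, hcT, hc0, rfl⟩ := hx
  refine ⟨q • c, (Finset.coe_subset.mpr Finsupp.support_smul).trans hcT,
    fun s => mul_nonneg hq (hc0 s), ?_⟩
  rw [Finsupp.sum_smul_index (fun s => zero_smul ℚ s), Finsupp.smul_sum]
  exact Finsupp.sum_congr fun s _ => (mul_smul q (c s) s).symm

lemma coneGen_subset_of_subset_coneGen {T U : Set V} (h : T ⊆ coneGen U) :
    coneGen T ⊆ coneGen U := by
  rintro _ ⟨c, hcT, hc0, rfl⟩
  exact Finset.sum_induction _ (· ∈ coneGen U) (fun _ _ => add_mem_coneGen)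
    (zero_mem_coneGen U) fun s hs => smul_mem_coneGen (hc0 s) (h (hcT hs))

lemma coneGen_mono {T U : Set V} (h : T ⊆ U) : coneGen T ⊆ coneGen U :=
  coneGen_subset_of_subset_coneGen (h.trans (subset_coneGen U))

lemma coneGen_insert_smul {q : ℚ} (hq : 0 < q) (s : V) (T : Set V) :
    coneGen (insert (q • s) T) = coneGen (insert s T) := by
  have hT (s' : V) : T ⊆ coneGen (insert s' T) :=
    (Set.subset_insert s' T).trans (subset_coneGen _)
  have hs (s' : V) : s' ∈ coneGen (insert s' T) := subset_coneGen _ (Set.mem_insert s' T)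
  refine (coneGen_subset_of_subset_coneGen ?_).antisymm (coneGen_subset_of_subset_coneGen ?_)
  · exact Set.insert_subset (smul_mem_coneGen hq.le (hs s)) (hT s)
  · refine Set.insert_subset ?_ (hT _)
    simpa [smul_smul, inv_mul_cancel₀ hq.ne'] using
      smul_mem_coneGen (inv_nonneg.mpr hq.le) (hs (q • s))

lemma eq_of_sum_smul_eq {S : Set V} (hS : LinearIndependent ℚ (Subtype.val : S → V))
    {c d : V →₀ ℚ} (hc : ↑c.support ⊆ S) (hd : ↑d.support ⊆ S)
    (h : (c.sum fun s q => q • s) = d.sum fun s q => q • s) : c = d :=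
  linearIndepOn_iffₛ.mp (show LinearIndepOn ℚ id S from hS)
    c ((Finsupp.mem_supported ℚ c).mpr hc) d ((Finsupp.mem_supported ℚ d).mpr hd)
    (by simpa [Finsupp.linearCombination_apply] using h)

theorem isFaceOfSet_coneGen_of_subset {S T : Set V}
    (hS : LinearIndependent ℚ (Subtype.val : S → V)) (hTS : T ⊆ S) :
    IsFaceOfSet (coneGen T) (coneGen S) := by
  refine ⟨coneGen_mono hTS, ?_⟩
  suffices key : ∀ x ∈ coneGen S, ∀ y ∈ coneGen S, x + y ∈ coneGen T → x ∈ coneGen T from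
    fun x hx y hy hxy => ⟨key x hx y hy hxy, key y hy x hx (add_comm x y ▸ hxy)⟩
  rintro _ ⟨c, hcS, hc0, rfl⟩ _ ⟨d, hdS, hd0, rfl⟩ ⟨e, heT, -, he⟩
  classical
  have hcde : c + d = e := by
    refine eq_of_sum_smul_eq hS ?_ (heT.trans hTS) ?_
    · exact (Finset.coe_subset.mpr Finsupp.support_add).trans (by simpa using And.intro hcS hdS)
    · rw [Finsupp.sum_add_index' (fun s => zero_smul ℚ s) (fun s a b => add_smul a b s), he]
  refine ⟨c, fun s hs => heT ?_, hc0, rfl⟩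
  have hcs : 0 < c s := (hc0 s).lt_of_ne' (Finsupp.mem_support_iff.mp hs)
  rw [Finset.mem_coe, ← hcde, Finsupp.mem_support_iff, Finsupp.add_apply]
  exact (add_pos_of_pos_of_nonneg hcs (hd0 s)).ne'

theorem coneGen_pair_isFaceOf_general (S : Set V)
    (hS : LinearIndependent ℚ (Subtype.val : S → V))
    (Sig : Set V) (hSsub : Sig ⊆ coneGen S)
    (α β : V) (hα : α ∈ Sig) (hβ : β ∈ Sig)
    (s₁ s₂ : V) (hs₁ : s₁ ∈ S) (hs₂ : s₂ ∈ S)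
    (q₁ q₂ : ℚ) (hq₁ : 0 < q₁) (hq₂ : 0 < q₂)
    (hα' : α = q₁ • s₁) (hβ' : β = q₂ • s₂) :
    IsFaceOfSet (coneGen {α, β}) (coneGen Sig) := by
  have hαβ : coneGen {α, β} = coneGen {s₁, s₂} := by
    rw [hα', hβ', coneGen_insert_smul hq₁, Set.pair_comm, coneGen_insert_smul hq₂, Set.pair_comm]
  have hface := isFaceOfSet_coneGen_of_subset hS (Set.pair_subset hs₁ hs₂)
  rw [← hαβ] at hface
  exact hface.mono (coneGen_mono (Set.pair_subset hα hβ))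
    (coneGen_subset_of_subset_coneGen hSsub)

/-- If `α, β` are positive multiples of two distinct elements of a linearly
independent set `S` and belong to a finite subset `Sig` of the cone generated by
`S`, then `ℚ≥0·α + ℚ≥0·β` is a face of the cone generated by `Sig`. -/
theorem coneGen_pair_isFaceOf (S : Set V)
    (hS : LinearIndependent ℚ (Subtype.val : S → V))
    (Sig : Set V) (hSfin : Sig.Finite) (hSsub : Sig ⊆ coneGen S)
    (α β : V) (hα : α ∈ Sig) (hβ : β ∈ Sig)
    (s₁ s₂ : V) (hs₁ : s₁ ∈ S) (hs₂ : s₂ ∈ S) (hne : s₁ ≠ s₂)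
    (q₁ q₂ : ℚ) (hq₁ : 0 < q₁) (hq₂ : 0 < q₂)
    (hα' : α = q₁ • s₁) (hβ' : β = q₂ • s₂) :
    IsFaceOfSet (coneGen {α, β}) (coneGen Sig) :=
  coneGen_pair_isFaceOf_general S hS Sig hSsub α β hα hβ s₁ s₂ hs₁ hs₂ q₁ q₂ hq₁ hq₂ hα' hβ'
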